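/- arXiv:math-ph/0603070 — 4 statements merged into one kernel-verified Lean document; each statement's English description precedes it below -/
import Mathlib

section
/- If K : ℝ → ℝ is even, nonnegative, nonincreasing on (0,∞), integrable, and v : ℝ → ℝ is odd, bounded, measurable with v(y) ≥ 0 for y ≤ 0, then (K*v)(x) ≥ 0 for all x ≤ 0. -/
open MeasureTheory

theorem conv_odd_nonneg (K v : ℝ → ℝ)
    (hKeven : ∀ z, K (-z) = K z) (hKpos : ∀ z, 0 ≤ K z)
    (hKmono : ∀ a b : ℝ, 0 < a → a ≤ b → K b ≤ K a)
    (hKint : Integrable K)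
    (hvodd : ∀ y, v (-y) = -v y)
    (hvmeas : Measurable v) (hvbd : ∃ M, ∀ y, |v y| ≤ M)
    (hvpos : ∀ y : ℝ, y ≤ 0 → 0 ≤ v y) :
    ∀ x : ℝ, x ≤ 0 → 0 ≤ ∫ y, K (x - y) * v y := by
  intro x hx
  obtain ⟨M, hM⟩ := hvbd
  have habs : ∀ z : ℝ, K |z| = K z := by
    intro z
    rcases abs_choice z with h | h
    · rw [h]
    · rw [h, hKeven]
  have hv0 : v 0 = 0 := by
    have := hvodd 0
    simp at this
    linarith
  have hvneg : ∀ y : ℝ, 0 ≤ y → v y ≤ 0 := by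
    intro y hy
    have h1 := hvpos (-y) (by linarith)
    rw [hvodd] at h1
    linarith
  -- integrability
  have hvbnd : ∃ C, ∀ y, ‖v y‖ ≤ C := ⟨M, fun y => hM y⟩
  have hintf : Integrable (fun y => K (x - y) * v y) := by
    have h1 : Integrable (fun y => K (x - y)) := hKint.comp_sub_left x
    have := h1.bdd_mul hvmeas.aestronglyMeasurable (ae_of_all _ hvbnd.choose_spec)
    simpa [mul_comm] using this
  have hintg : Integrable (fun y => K (x + y) * v y) := by
    have h1 : Integrable (fun y => K (x + y)) := hKint.comp_add_left x
    have := h1.bdd_mul hvmeas.aestronglyMeasurable (ae_of_all _ hvbnd.choose_spec)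
    simpa [mul_comm] using this
  -- the substitution y ↦ -y
  have hsub : (∫ y, K (x - y) * v y) = -∫ y, K (x + y) * v y := by
    have h1 : (∫ y, K (x - y) * v y) = ∫ y, K (x - (-y)) * v (-y) := by
      exact (integral_neg_eq_self (fun y => K (x - y) * v y) volume).symm
    rw [h1]
    have h2 : ∀ y : ℝ, K (x - (-y)) * v (-y) = -(K (x + y) * v y) := by
      intro y
      rw [hvodd]
      ring_nf
    simp only [h2]
    rw [integral_neg]
  -- pointwise a.e. nonnegativity of the symmetrized integrand
  have hae : ∀ᵐ y : ℝ, 0 ≤ K (x - y) * v y - K (x + y) * v y := by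
    have h1 : ∀ᵐ y : ℝ, y ≠ x := by
      rw [ae_iff]
      have : {y : ℝ | ¬ y ≠ x} = {x} := by ext y; simp
      rw [this]; exact measure_singleton x
    have h2 : ∀ᵐ y : ℝ, y ≠ -x := by
      rw [ae_iff]
      have : {y : ℝ | ¬ y ≠ -x} = {-x} := by ext y; simp
      rw [this]; exact measure_singleton (-x)
    filter_upwards [h1, h2] with y hy1 hy2
    have key : K (x - y) * v y - K (x + y) * v y = (K (x - y) - K (x + y)) * v y := by ring
    rw [key]
    rcases lt_trichotomy y 0 with hy | hy | hy
    · -- y < 0 : v y ≥ 0, K(x-y) ≥ K(x+y)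
      have hvy : 0 ≤ v y := hvpos y hy.le
      have hpos : 0 < |x - y| := by
        rw [abs_pos]
        intro h
        exact hy1 (by linarith)
      have hle : |x - y| ≤ -x - y := by
        have : |x - y| ≤ |x| + |y| := abs_sub x y
        rw [abs_of_nonpos hx, abs_of_neg hy] at this
        linarith
      have hK1 : K (-x - y) ≤ K |x - y| := hKmono _ _ hpos hle
      rw [habs] at hK1
      have hK2 : K (x + y) = K (-x - y) := by
        rw [← hKeven (x + y)]; ring_nf
      nlinarith
    · simp [hy, hv0]
    · -- y > 0 : v y ≤ 0, K(x-y) ≤ K(x+y)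
      have hvy : v y ≤ 0 := hvneg y hy.le
      have hpos : 0 < |x + y| := by
        rw [abs_pos]
        intro h
        exact hy2 (by linarith)
      have hle : |x + y| ≤ y - x := by
        have : |x + y| ≤ |x| + |y| := abs_add_le x y
        rw [abs_of_nonpos hx, abs_of_pos hy] at this
        linarith
      have hK1 : K (y - x) ≤ K |x + y| := hKmono _ _ hpos hle
      rw [habs] at hK1
      have hK2 : K (x - y) = K (y - x) := by
        rw [← hKeven (x - y)]; ring_nf
      nlinarith
  have hI : 0 ≤ ∫ y, (K (x - y) * v y - K (x + y) * v y) :=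
    integral_nonneg_of_ae hae
  rw [integral_sub hintf hintg] at hI
  linarith [hsub, hI]
end

section
/- For ε > 0 and a nonnegative kernel K with ∫_ℝ y² K(y) dy < ∞, the limit as x → 0⁻ of the quotient g(x,ε) := [−∫_ℝ K(x−y)(arctan(εy) − arctan(εx)) dy] / [(2u_c/π) arctan(εx) · ε/(1+ε²x²)] equals (π ε)/(2 u_c) ∫_ℝ y² K(y)/(1+ε² y²) dy. -/
open MeasureTheory Filter Real

private lemma arctan_lipschitz (a b : ℝ) : |Real.arctan a - Real.arctan b| ≤ |a - b| := by
  have lip : LipschitzWith 1 Real.arctan := by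
    apply lipschitzWith_of_nnnorm_deriv_le Real.differentiable_arctan
    intro x
    simp only [Real.deriv_arctan]
    rw [← NNReal.coe_le_coe, coe_nnnorm, NNReal.coe_one, Real.norm_eq_abs]
    rw [abs_of_pos (by positivity), div_le_one (by positivity)]
    nlinarith [sq_nonneg x]
  simpa [Real.dist_eq] using lip.dist_le_mul a b

private lemma tendsto_div_slope {f : ℝ → ℝ} {d : ℝ} (h0 : f 0 = 0) (hd : HasDerivAt f d 0) :
    Tendsto (fun x => f x / x) (nhdsWithin 0 (Set.Iio 0)) (nhds d) := by
  have h := hasDerivAt_iff_tendsto_slope.mp hd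
  have h2 := h.mono_left (nhdsWithin_mono 0 (fun x hx => ne_of_lt hx))
  refine h2.congr fun x => ?_
  simp [slope_def_field, h0]

theorem limit_g_at_zero (K : ℝ → ℝ) (u_c ε : ℝ)
    (hKpos : ∀ z, 0 ≤ K z) (hKeven : ∀ z, K (-z) = K z)
    (hKint : Integrable K)
    (hK2 : Integrable (fun y => y ^ 2 * K y))
    (hc : 0 < u_c) (hε : 0 < ε) :
    Tendsto
      (fun x : ℝ =>
        (-∫ y, K (x - y) * (arctan (ε * y) - arctan (ε * x))) /
          ((2 * u_c / π) * arctan (ε * x) * (ε / (1 + ε ^ 2 * x ^ 2))))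
      (nhdsWithin 0 (Set.Iio 0))
      (nhds ((π * ε) / (2 * u_c) * ∫ y, y ^ 2 * K y / (1 + ε ^ 2 * y ^ 2))) := by
  have hπ : (0:ℝ) < π := pi_pos
  have hεne : ε ≠ 0 := ne_of_gt hε
  have hcne : u_c ≠ 0 := ne_of_gt hc
  set I : ℝ := ∫ y, y ^ 2 * K y / (1 + ε ^ 2 * y ^ 2) with hIdef
  have harc : ∀ t : ℝ, |arctan t| ≤ π / 2 := fun t =>
    le_of_lt (abs_lt.mpr ⟨neg_pi_div_two_lt_arctan t, arctan_lt_pi_div_two t⟩)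
  -- integrability helper
  have hmul : ∀ f : ℝ → ℝ, Continuous f → (∃ C, ∀ z, |f z| ≤ C) →
      Integrable (fun z => K z * f z) := by
    rintro f hf ⟨C, hC⟩
    have := hKint.bdd_mul hf.aestronglyMeasurable
      (Filter.Eventually.of_forall fun z => by simpa [Real.norm_eq_abs] using hC z)
    simpa [mul_comm] using this
  -- odd term vanishes
  have hint2 : Integrable (fun z => K z * arctan (ε * z)) :=
    hmul _ (Real.continuous_arctan.comp (continuous_const.mul continuous_id))
      ⟨π / 2, fun z => harc _⟩
  have hodd : (∫ z : ℝ, K z * arctan (ε * z)) = 0 := by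
    have h := integral_neg_eq_self (fun z => K z * arctan (ε * z)) volume
    have h2 : (∫ z : ℝ, K (-z) * arctan (ε * -z)) = -∫ z : ℝ, K z * arctan (ε * z) := by
      rw [← integral_neg]
      congr 1; funext z
      rw [hKeven, show ε * -z = -(ε * z) by ring, Real.arctan_neg]; ring
    rw [h2] at h
    linarith
  have hint1 : ∀ x : ℝ,
      Integrable (fun z => K z * (arctan (ε * (x - z)) - arctan (ε * x))) := by
    intro x
    refine hmul _ ?_ ⟨π, fun z => ?_⟩
    · exact (Real.continuous_arctan.comp (continuous_const.mul
        ((continuous_const.sub continuous_id)))).sub continuous_const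
    · calc |arctan (ε * (x - z)) - arctan (ε * x)|
          ≤ |arctan (ε * (x - z))| + |arctan (ε * x)| := abs_sub _ _
        _ ≤ π / 2 + π / 2 := add_le_add (harc _) (harc _)
        _ = π := by ring
  -- change of variables
  have hCOV : ∀ x : ℝ, (∫ y, K (x - y) * (arctan (ε * y) - arctan (ε * x)))
      = ∫ z, K z * (arctan (ε * (x - z)) - arctan (ε * x)) := by
    intro x
    have h := integral_sub_left_eq_self
      (fun z => K z * (arctan (ε * (x - z)) - arctan (ε * x))) volume x
    rw [← h]
    congr 1; funext y
    rw [show x - (x - y) = y by ring]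
  -- split off the odd part
  have hsplit : ∀ x : ℝ, (∫ z, K z * (arctan (ε * (x - z)) - arctan (ε * x)))
      = ∫ z, K z * (arctan (ε * (x - z)) - arctan (ε * x) + arctan (ε * z)) := by
    intro x
    rw [show (fun z => K z * (arctan (ε * (x - z)) - arctan (ε * x) + arctan (ε * z)))
        = fun z => K z * (arctan (ε * (x - z)) - arctan (ε * x)) + K z * arctan (ε * z)
        from funext fun z => by ring]
    rw [integral_add (hint1 x) hint2, hodd, add_zero]
  -- dominated convergence for the difference quotient
  have key : Tendsto
      (fun x : ℝ => ∫ z, K z * ((arctan (ε * (x - z)) - arctan (ε * x) + arctan (ε * z)) / x))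
      (nhdsWithin 0 (Set.Iio 0))
      (nhds (∫ z, K z * (ε / (1 + ε ^ 2 * z ^ 2) - ε))) := by
    apply tendsto_integral_filter_of_dominated_convergence (fun z => K z * (2 * ε))
    · filter_upwards with x
      exact hKint.1.mul
        (((((Real.continuous_arctan.comp (continuous_const.mul
          (continuous_const.sub continuous_id))).sub continuous_const).add
          (Real.continuous_arctan.comp (continuous_const.mul continuous_id))).div_const
          x).aestronglyMeasurable)
    · filter_upwards [self_mem_nhdsWithin] with x hx
      filter_upwards with z
      have hx0 : x ≠ 0 := ne_of_lt hx
      have e1 : |arctan (ε * (x - z)) - arctan (ε * (-z))| ≤ |ε * x| := by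
        have := arctan_lipschitz (ε * (x - z)) (ε * (-z))
        rwa [show ε * (x - z) - ε * (-z) = ε * x by ring] at this
      have e2 : |arctan (ε * x)| ≤ |ε * x| := by
        have := arctan_lipschitz (ε * x) 0
        simpa using this
      have hφ : |arctan (ε * (x - z)) - arctan (ε * x) + arctan (ε * z)| ≤ 2 * ε * |x| := by
        have h3 : arctan (ε * (x - z)) - arctan (ε * x) + arctan (ε * z)
            = (arctan (ε * (x - z)) - arctan (ε * (-z))) - arctan (ε * x) := by
          rw [show ε * (-z) = -(ε * z) by ring, Real.arctan_neg]; ring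
        rw [h3]
        calc |(arctan (ε * (x - z)) - arctan (ε * (-z))) - arctan (ε * x)|
            ≤ |arctan (ε * (x - z)) - arctan (ε * (-z))| + |arctan (ε * x)| := abs_sub _ _
          _ ≤ |ε * x| + |ε * x| := add_le_add e1 e2
          _ = 2 * ε * |x| := by rw [abs_mul, abs_of_pos hε]; ring
      rw [Real.norm_eq_abs, abs_mul, abs_of_nonneg (hKpos z), abs_div]
      refine mul_le_mul_of_nonneg_left ?_ (hKpos z)
      rw [div_le_iff₀ (abs_pos.mpr hx0)]
      exact hφ
    · exact hKint.mul_const _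
    · filter_upwards with z
      have h0 : (fun x : ℝ => arctan (ε * (x - z)) - arctan (ε * x) + arctan (ε * z)) 0 = 0 := by
        simp [show ε * ((0:ℝ) - z) = -(ε * z) by ring, Real.arctan_neg]
      have d1 : HasDerivAt (fun x : ℝ => ε * (x - z)) ε 0 := by
        simpa using ((hasDerivAt_id (0:ℝ)).sub_const z).const_mul ε
      have d2 : HasDerivAt (fun x : ℝ => arctan (ε * (x - z)))
          (1 / (1 + (ε * ((0:ℝ) - z)) ^ 2) * ε) 0 :=
        d1.arctan
      have d3 : HasDerivAt (fun x : ℝ => ε * x) ε 0 := by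
        simpa using (hasDerivAt_id (0:ℝ)).const_mul ε
      have d4 : HasDerivAt (fun x : ℝ => arctan (ε * x)) (1 / (1 + (ε * (0:ℝ)) ^ 2) * ε) 0 :=
        (Real.hasDerivAt_arctan (ε * (0:ℝ))).comp 0 d3
      have d5 := (d2.sub d4).add_const (arctan (ε * z))
      have hd : HasDerivAt
          (fun x : ℝ => arctan (ε * (x - z)) - arctan (ε * x) + arctan (ε * z))
          (ε / (1 + ε ^ 2 * z ^ 2) - ε) 0 := by
        refine d5.congr_deriv ?_
        have hz : (1:ℝ) + ε ^ 2 * z ^ 2 ≠ 0 := by positivity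
        field_simp
        ring
      exact (tendsto_div_slope h0 hd).const_mul (K z)
  -- value of the limit integral
  have hval : (∫ z, K z * (ε / (1 + ε ^ 2 * z ^ 2) - ε)) = -(ε ^ 3 * I) := by
    rw [show (fun z : ℝ => K z * (ε / (1 + ε ^ 2 * z ^ 2) - ε))
        = fun z => -(ε ^ 3 * (z ^ 2 * K z / (1 + ε ^ 2 * z ^ 2))) from funext fun z => by
          have hz : (1:ℝ) + ε ^ 2 * z ^ 2 ≠ 0 := by positivity
          field_simp
          ring]
    rw [integral_neg, integral_const_mul]
  -- numerator limit
  have hnum : Tendsto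
      (fun x : ℝ => (-∫ y, K (x - y) * (arctan (ε * y) - arctan (ε * x))) / x)
      (nhdsWithin 0 (Set.Iio 0)) (nhds (ε ^ 3 * I)) := by
    have heq : ∀ x : ℝ,
        (-∫ y, K (x - y) * (arctan (ε * y) - arctan (ε * x))) / x
        = -(∫ z, K z * ((arctan (ε * (x - z)) - arctan (ε * x) + arctan (ε * z)) / x)) := by
      intro x
      rw [hCOV x, hsplit x]
      rw [show (fun z => K z * ((arctan (ε * (x - z)) - arctan (ε * x) + arctan (ε * z)) / x))
          = fun z => (K z * (arctan (ε * (x - z)) - arctan (ε * x) + arctan (ε * z))) / x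
          from funext fun z => (mul_div_assoc _ _ _).symm]
      rw [integral_div, neg_div]
    have hkey2 : Tendsto
        (fun x : ℝ => -(∫ z, K z * ((arctan (ε * (x - z)) - arctan (ε * x) + arctan (ε * z)) / x)))
        (nhdsWithin 0 (Set.Iio 0)) (nhds (ε ^ 3 * I)) := by
      rw [hval] at key
      simpa using key.neg
    exact hkey2.congr fun x => (heq x).symm
  -- denominator limit
  have hden : Tendsto
      (fun x : ℝ => ((2 * u_c / π) * arctan (ε * x) * (ε / (1 + ε ^ 2 * x ^ 2))) / x)
      (nhdsWithin 0 (Set.Iio 0)) (nhds ((2 * u_c / π) * ε * ε)) := by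
    have h1 : Tendsto (fun x : ℝ => arctan (ε * x) / x)
        (nhdsWithin 0 (Set.Iio 0)) (nhds ε) := by
      have d3 : HasDerivAt (fun x : ℝ => ε * x) ε 0 := by
        simpa using (hasDerivAt_id (0:ℝ)).const_mul ε
      have d4 : HasDerivAt (fun x : ℝ => arctan (ε * x)) ε 0 := by
        have := d3.arctan
        convert this using 1
        norm_num
      exact tendsto_div_slope (by simp) d4
    have h2 : Tendsto (fun x : ℝ => ε / (1 + ε ^ 2 * x ^ 2))
        (nhdsWithin 0 (Set.Iio 0)) (nhds ε) := by
      have hcont : Continuous fun x : ℝ => ε / (1 + ε ^ 2 * x ^ 2) :=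
        continuous_const.div (by continuity) (fun x => by positivity)
      have ht : Tendsto (fun x : ℝ => ε / (1 + ε ^ 2 * x ^ 2))
          (nhdsWithin 0 (Set.Iio 0)) (nhds (ε / (1 + ε ^ 2 * (0:ℝ) ^ 2))) :=
        (hcont.tendsto 0).mono_left nhdsWithin_le_nhds
      norm_num at ht
      exact ht
    have h3 : Tendsto (fun x : ℝ => (2 * u_c / π) * (arctan (ε * x) / x) * (ε / (1 + ε ^ 2 * x ^ 2)))
        (nhdsWithin 0 (Set.Iio 0)) (nhds ((2 * u_c / π) * ε * ε)) :=
      (tendsto_const_nhds.mul h1).mul h2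
    exact h3.congr fun x => by ring
  have hdenne : (2 * u_c / π) * ε * ε ≠ 0 := by positivity
  have hfinal := hnum.div hden hdenne
  have hlimval : (ε ^ 3 * I) / ((2 * u_c / π) * ε * ε) = π * ε / (2 * u_c) * I := by
    field_simp
  rw [← hlimval]
  apply hfinal.congr'
  filter_upwards [self_mem_nhdsWithin] with x hx
  have hx0 : x ≠ 0 := ne_of_lt hx
  simp only [Pi.div_apply]
  rw [div_div_div_cancel_right₀ hx0]
end

section
/- Let K be nonnegative, even, integrable with ∫ K = 1 and ∫ y²K(y) dy < ∞, and u_c > 0. There exists ε₀ > 0 such that for all 0 < ε ≤ ε₀, the function s(x) = −(2u_c/π) arctan(εx) satisfies s + s·s' ≤ K*s pointwise on (−∞,0), i.e. s is a subsolution. -/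
open MeasureTheory Filter Real

lemma arctan_lower_aux (w : ℝ) (hw : 0 ≤ w) : w / (1 + w ^ 2) ≤ arctan w := by
  rcases eq_or_lt_of_le hw with h | h
  · simp [← h]
  have h1 : (0:ℝ) < 1 + w ^ 2 := by positivity
  have h2 : w / (1 + w ^ 2) = sin (arctan w) * cos (arctan w) := by
    rw [Real.sin_arctan, Real.cos_arctan, div_mul_div_comm, mul_one,
      Real.mul_self_sqrt h1.le]
  have hθpos : 0 < arctan w := by
    rw [← Real.arctan_zero]; exact Real.arctan_strictMono h
  have hsin : sin (arctan w) < arctan w := Real.sin_lt hθpos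
  have hsn : 0 ≤ sin (arctan w) := by
    apply Real.sin_nonneg_of_nonneg_of_le_pi hθpos.le
    have := Real.arctan_lt_pi_div_two w
    have := Real.pi_pos
    linarith
  have hc1 : cos (arctan w) ≤ 1 := Real.cos_le_one _
  have hc0 : 0 < cos (arctan w) := Real.cos_arctan_pos w
  rw [h2]
  nlinarith

set_option maxHeartbeats 1000000 in
lemma D_bound (u v : ℝ) (hu : u < 0) (hv : 0 ≤ v) :
    arctan (u - v) + arctan (u + v) - 2 * arctan u ≤
      32 * v ^ 2 * (-arctan u) / (1 + u ^ 2) := by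
  have h3 : (0:ℝ) < 1 + u ^ 2 := by positivity
  have hQ : 0 < -arctan u := by
    have : arctan u < arctan 0 := Real.arctan_strictMono hu
    rw [Real.arctan_zero] at this; linarith
  -- the case where v is large compared to |u| and u ≤ -1 is handled directly
  by_cases hu1 : u < -1
  · by_cases hv2 : v ≤ -u / 2
    · -- FTC representation and pointwise bound
      have hcont : Continuous fun t : ℝ => 1 / (1 + (u + t) ^ 2) - 1 / (1 + (u - t) ^ 2) := by
        exact (continuous_const.div (continuous_const.add ((continuous_const.add continuous_id).pow 2)) (fun t => ne_of_gt (add_pos_of_pos_of_nonneg one_pos (sq_nonneg _)))).sub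
          (continuous_const.div (continuous_const.add ((continuous_const.sub continuous_id).pow 2)) (fun t => ne_of_gt (add_pos_of_pos_of_nonneg one_pos (sq_nonneg _))))
      have hD : ∀ w : ℝ, HasDerivAt (fun t => arctan (u + t) + arctan (u - t))
          (1 / (1 + (u + w) ^ 2) - 1 / (1 + (u - w) ^ 2)) w := by
        intro w
        have h1 : HasDerivAt (fun t : ℝ => arctan (u + t)) (1 / (1 + (u + w) ^ 2)) w := by
          simpa [Function.comp_def] using (Real.hasDerivAt_arctan (u + w)).comp w ((hasDerivAt_id w).const_add u)
        have h2 : HasDerivAt (fun t : ℝ => arctan (u - t)) (-(1 / (1 + (u - w) ^ 2))) w := by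
          have := (Real.hasDerivAt_arctan (u + -w)).comp w (((hasDerivAt_id w).neg).const_add u)
          simpa [sub_eq_add_neg, Function.comp_def] using this
        simpa [sub_eq_add_neg, Pi.add_def] using h1.add h2
      have heq : arctan (u - v) + arctan (u + v) - 2 * arctan u
          = ∫ t in (0:ℝ)..v, (1 / (1 + (u + t) ^ 2) - 1 / (1 + (u - t) ^ 2)) := by
        rw [intervalIntegral.integral_eq_sub_of_hasDerivAt (fun t _ => hD t)
          (hcont.intervalIntegrable 0 v)]
        simp; ring
      rw [heq]
      have hb : ∀ t ∈ Set.Icc (0:ℝ) v,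
          1 / (1 + (u + t) ^ 2) - 1 / (1 + (u - t) ^ 2) ≤ 16 * (-u) / (1 + u ^ 2) ^ 2 * t := by
        intro t ht
        have ht0 := ht.1
        have htv := ht.2
        have h1 : (0:ℝ) < 1 + (u + t) ^ 2 := by positivity
        have h2 : (0:ℝ) < 1 + (u - t) ^ 2 := by positivity
        rw [div_sub_div _ _ h1.ne' h2.ne']
        have hq : (0:ℝ) < (1 + u ^ 2) ^ 2 / 4 := by positivity
        have hle : (1 + u ^ 2) ^ 2 / 4 ≤ (1 + (u + t) ^ 2) * (1 + (u - t) ^ 2) := by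
          have ha : u + t ≤ u / 2 := by linarith
          have hA : u ^ 2 / 4 ≤ (u + t) ^ 2 := by nlinarith
          have hB : u ^ 2 ≤ (u - t) ^ 2 := by nlinarith
          nlinarith [sq_nonneg u]
        have hnn : (0:ℝ) ≤ 1 * (1 + (u - t) ^ 2) - (1 + (u + t) ^ 2) * 1 := by nlinarith
        calc (1 * (1 + (u - t) ^ 2) - (1 + (u + t) ^ 2) * 1) / ((1 + (u + t) ^ 2) * (1 + (u - t) ^ 2))
            ≤ (1 * (1 + (u - t) ^ 2) - (1 + (u + t) ^ 2) * 1) / ((1 + u ^ 2) ^ 2 / 4) := by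
              gcongr
          _ = 16 * (-u) / (1 + u ^ 2) ^ 2 * t := by
              field_simp; ring
      have hIle : (∫ t in (0:ℝ)..v, (1 / (1 + (u + t) ^ 2) - 1 / (1 + (u - t) ^ 2)))
          ≤ ∫ t in (0:ℝ)..v, 16 * (-u) / (1 + u ^ 2) ^ 2 * t :=
        intervalIntegral.integral_mono_on hv (hcont.intervalIntegrable 0 v)
          ((continuous_const.mul continuous_id).intervalIntegrable 0 v) hb
      have hIval : (∫ t in (0:ℝ)..v, 16 * (-u) / (1 + u ^ 2) ^ 2 * t)
          = 8 * (-u) / (1 + u ^ 2) ^ 2 * v ^ 2 := by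
        rw [intervalIntegral.integral_const_mul, integral_id]; ring
      refine le_trans (hIle.trans_eq hIval) ?_
      rw [div_mul_eq_mul_div, div_le_div_iff₀ (by positivity) h3]
      have hQ4 : π / 4 ≤ -arctan u := by
        have : arctan 1 < arctan (-u) := Real.arctan_strictMono (by linarith)
        rw [Real.arctan_one, Real.arctan_neg] at this
        linarith
      have hpi : (3:ℝ) < π := Real.pi_gt_three
      have h2u : 2 * (-u) ≤ 1 + u ^ 2 := by nlinarith [sq_nonneg (u + 1)]
      nlinarith [sq_nonneg v, sq_nonneg (1 + u ^ 2), mul_nonneg (sq_nonneg v) (sq_nonneg (1 + u ^ 2)),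
        mul_le_mul_of_nonneg_right h2u (mul_nonneg (sq_nonneg v) h3.le),
        mul_le_mul_of_nonneg_right hQ4 (mul_nonneg (sq_nonneg v) (mul_nonneg h3.le h3.le))]
    · -- v large: crude bound by π
      push_neg at hv2
      have hd1 : arctan (u - v) ≤ arctan u := Real.arctan_strictMono.monotone (by linarith)
      have hd2 : arctan (u + v) < π / 2 := Real.arctan_lt_pi_div_two _
      have hd3 : -(π / 2) < arctan u := Real.neg_pi_div_two_lt_arctan u
      rw [le_div_iff₀ h3]
      have hQ4 : π / 4 ≤ -arctan u := by
        have : arctan 1 < arctan (-u) := Real.arctan_strictMono (by linarith)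
        rw [Real.arctan_one, Real.arctan_neg] at this
        linarith
      have hu2 : (1:ℝ) ≤ u ^ 2 := by nlinarith
      have hv2' : u ^ 2 / 4 ≤ v ^ 2 := by nlinarith
      have hpi := Real.pi_pos
      have hprod : u ^ 2 / 4 * (π / 4) ≤ v ^ 2 * (-arctan u) :=
        mul_le_mul hv2' hQ4 (by positivity) (sq_nonneg v)
      have hDpi : arctan (u - v) + arctan (u + v) - 2 * arctan u ≤ π := by linarith
      linarith [mul_le_mul_of_nonneg_right hDpi h3.le, hprod,
        mul_le_mul_of_nonneg_left hu2 hpi.le]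
  · -- -1 ≤ u : crude pointwise bound on the derivative
    push_neg at hu1
    have hcont : Continuous fun t : ℝ => 1 / (1 + (u + t) ^ 2) - 1 / (1 + (u - t) ^ 2) := by
      exact (continuous_const.div (continuous_const.add ((continuous_const.add continuous_id).pow 2)) (fun t => ne_of_gt (add_pos_of_pos_of_nonneg one_pos (sq_nonneg _)))).sub
        (continuous_const.div (continuous_const.add ((continuous_const.sub continuous_id).pow 2)) (fun t => ne_of_gt (add_pos_of_pos_of_nonneg one_pos (sq_nonneg _))))
    have hD : ∀ w : ℝ, HasDerivAt (fun t => arctan (u + t) + arctan (u - t))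
        (1 / (1 + (u + w) ^ 2) - 1 / (1 + (u - w) ^ 2)) w := by
      intro w
      have h1 : HasDerivAt (fun t : ℝ => arctan (u + t)) (1 / (1 + (u + w) ^ 2)) w := by
        simpa [Function.comp_def] using (Real.hasDerivAt_arctan (u + w)).comp w ((hasDerivAt_id w).const_add u)
      have h2 : HasDerivAt (fun t : ℝ => arctan (u - t)) (-(1 / (1 + (u - w) ^ 2))) w := by
        have := (Real.hasDerivAt_arctan (u + -w)).comp w (((hasDerivAt_id w).neg).const_add u)
        simpa [sub_eq_add_neg, Function.comp_def] using this
      simpa [sub_eq_add_neg, Pi.add_def] using h1.add h2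
    have heq : arctan (u - v) + arctan (u + v) - 2 * arctan u
        = ∫ t in (0:ℝ)..v, (1 / (1 + (u + t) ^ 2) - 1 / (1 + (u - t) ^ 2)) := by
      rw [intervalIntegral.integral_eq_sub_of_hasDerivAt (fun t _ => hD t)
        (hcont.intervalIntegrable 0 v)]
      simp; ring
    rw [heq]
    have hb : ∀ t ∈ Set.Icc (0:ℝ) v,
        1 / (1 + (u + t) ^ 2) - 1 / (1 + (u - t) ^ 2) ≤ 4 * (-u) * t := by
      intro t ht
      have ht0 := ht.1
      have h1 : (0:ℝ) < 1 + (u + t) ^ 2 := by positivity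
      have h2 : (0:ℝ) < 1 + (u - t) ^ 2 := by positivity
      rw [div_sub_div _ _ h1.ne' h2.ne']
      have hp1 : (1:ℝ) ≤ (1 + (u + t) ^ 2) * (1 + (u - t) ^ 2) := by
        nlinarith [sq_nonneg (u + t), sq_nonneg (u - t), mul_nonneg (sq_nonneg (u + t)) (sq_nonneg (u - t))]
      have hnn : (0:ℝ) ≤ 1 * (1 + (u - t) ^ 2) - (1 + (u + t) ^ 2) * 1 := by nlinarith
      calc (1 * (1 + (u - t) ^ 2) - (1 + (u + t) ^ 2) * 1) / ((1 + (u + t) ^ 2) * (1 + (u - t) ^ 2))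
          ≤ 1 * (1 + (u - t) ^ 2) - (1 + (u + t) ^ 2) * 1 := div_le_self hnn hp1
        _ = 4 * (-u) * t := by ring
    have hIle : (∫ t in (0:ℝ)..v, (1 / (1 + (u + t) ^ 2) - 1 / (1 + (u - t) ^ 2)))
        ≤ ∫ t in (0:ℝ)..v, 4 * (-u) * t :=
      intervalIntegral.integral_mono_on hv (hcont.intervalIntegrable 0 v)
        ((continuous_const.mul continuous_id).intervalIntegrable 0 v) hb
    have hIval : (∫ t in (0:ℝ)..v, 4 * (-u) * t) = 2 * (-u) * v ^ 2 := by
      rw [intervalIntegral.integral_const_mul, integral_id]; ring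
    refine le_trans (hIle.trans_eq hIval) ?_
    rw [le_div_iff₀ h3]
    have hal : (-u) / (1 + u ^ 2) ≤ -arctan u := by
      have := arctan_lower_aux (-u) (by linarith)
      rwa [Real.arctan_neg, neg_sq] at this
    have hal' : -u ≤ (-arctan u) * (1 + u ^ 2) := by
      rw [div_le_iff₀ h3] at hal; linarith
    have hu2 : u ^ 2 ≤ 1 := by nlinarith
    nlinarith [sq_nonneg v, mul_nonneg (sq_nonneg v) hQ.le,
      mul_le_mul_of_nonneg_right hal' (mul_nonneg (sq_nonneg v) h3.le),
      mul_nonneg (mul_nonneg (sq_nonneg v) hQ.le) (sq_nonneg u)]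

set_option maxHeartbeats 1000000 in
theorem arctan_subsolution (K : ℝ → ℝ) (u_c : ℝ)
    (hKeven : ∀ z, K (-z) = K z) (hKpos : ∀ z, 0 ≤ K z)
    (hKint : Integrable K) (hKnorm : ∫ y, K y = 1)
    (hK2 : Integrable (fun y => y ^ 2 * K y))
    (hc : 0 < u_c) :
    ∃ ε₀ > 0, ∀ ε : ℝ, 0 < ε → ε ≤ ε₀ →
      ∀ x : ℝ, x < 0 →
        (-(2 * u_c / π) * arctan (ε * x)) +
          (-(2 * u_c / π) * arctan (ε * x)) *
            deriv (fun z => -(2 * u_c / π) * arctan (ε * z)) x ≤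
        ∫ y, K (x - y) * (-(2 * u_c / π) * arctan (ε * y)) := by
  have hπ : (0:ℝ) < π := Real.pi_pos
  set c : ℝ := 2 * u_c / π with hcdef
  have hc0 : 0 < c := by positivity
  set M : ℝ := ∫ y, y ^ 2 * K y with hMdef
  have hM0 : 0 ≤ M := integral_nonneg fun y => mul_nonneg (sq_nonneg y) (hKpos y)
  refine ⟨c / (16 * (M + 1)), by positivity, ?_⟩
  intro ε hε hεle x hx
  have hu : ε * x < 0 := mul_neg_of_pos_of_neg hε hx
  have h1u : (0:ℝ) < 1 + (ε * x) ^ 2 := by positivity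
  have ha : arctan (ε * x) < 0 := by
    have : arctan (ε * x) < arctan 0 := Real.arctan_strictMono hu
    rwa [Real.arctan_zero] at this
  have hT0 : 0 ≤ (-arctan (ε * x)) / (1 + (ε * x) ^ 2) :=
    div_nonneg (by linarith) h1u.le
  -- derivative computation
  have hder : HasDerivAt (fun z => -c * arctan (ε * z)) (-c * (1 / (1 + (ε * x) ^ 2) * ε)) x := by
    have h1 : HasDerivAt (fun z : ℝ => ε * z) ε x := by
      simpa using (hasDerivAt_id x).const_mul ε
    have h2 : HasDerivAt (fun z : ℝ => arctan (ε * z)) (1 / (1 + (ε * x) ^ 2) * ε) x :=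
      (Real.hasDerivAt_arctan (ε * x)).comp x h1
    exact h2.const_mul (-c)
  rw [hder.deriv]
  -- boundedness of the profile
  have harcbd : ∀ w : ℝ, ‖-c * arctan w‖ ≤ c * (π / 2) := by
    intro w
    rw [norm_mul, norm_neg]
    have h1 : |arctan w| ≤ π / 2 :=
      le_of_lt (abs_lt.mpr ⟨Real.neg_pi_div_two_lt_arctan w, Real.arctan_lt_pi_div_two w⟩)
    calc ‖c‖ * ‖arctan w‖ = c * |arctan w| := by rw [Real.norm_eq_abs, Real.norm_eq_abs, abs_of_pos hc0]
      _ ≤ c * (π / 2) := by nlinarith [abs_nonneg (arctan w)]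
  -- integrability
  have hcont1 : Continuous fun y : ℝ => -c * arctan (ε * (x - y)) := by
    exact continuous_const.mul (Real.continuous_arctan.comp (continuous_const.mul (continuous_const.sub continuous_id)))
  have hcont2 : Continuous fun y : ℝ => -c * arctan (ε * (x + y)) := by
    exact continuous_const.mul (Real.continuous_arctan.comp (continuous_const.mul (continuous_const.add continuous_id)))
  have Int1 : Integrable (fun y => K y * (-c * arctan (ε * (x - y)))) := by
    have h := hKint.bdd_mul hcont1.aestronglyMeasurable (Filter.Eventually.of_forall fun y => harcbd _)
    have e : (fun y => K y * (-c * arctan (ε * (x - y))))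
        = (fun y => -c * arctan (ε * (x - y))) * K := by
      funext y; simp [mul_comm]
    rw [e]; exact h
  have Int2 : Integrable (fun y => K y * (-c * arctan (ε * (x + y)))) := by
    have h := hKint.bdd_mul hcont2.aestronglyMeasurable (Filter.Eventually.of_forall fun y => harcbd _)
    have e : (fun y => K y * (-c * arctan (ε * (x + y))))
        = (fun y => -c * arctan (ε * (x + y))) * K := by
      funext y; simp [mul_comm]
    rw [e]; exact h
  -- rewriting the convolution
  have step1 : (∫ y, K (x - y) * (-c * arctan (ε * y)))
      = ∫ y, K y * (-c * arctan (ε * (x - y))) := by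
    have h := integral_sub_left_eq_self (fun z => K z * (-c * arctan (ε * (x - z)))) volume x
    simpa [sub_sub_cancel] using h
  have step2 : (∫ y, K y * (-c * arctan (ε * (x - y))))
      = ∫ y, K y * (-c * arctan (ε * (x + y))) := by
    have h := integral_neg_eq_self (fun z => K z * (-c * arctan (ε * (x + z)))) volume
    simpa [hKeven, ← sub_eq_add_neg] using h
  have step3 : (∫ y, K (x - y) * (-c * arctan (ε * y)))
      = ∫ y, K y * ((-c * arctan (ε * (x - y)) + -c * arctan (ε * (x + y))) / 2) := by
    rw [step1]
    calc (∫ y, K y * (-c * arctan (ε * (x - y))))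
        = ((∫ y, K y * (-c * arctan (ε * (x - y)))) + ∫ y, K y * (-c * arctan (ε * (x + y)))) / 2 := by
          rw [← step2]; ring
      _ = (∫ y, (K y * (-c * arctan (ε * (x - y))) + K y * (-c * arctan (ε * (x + y))))) / 2 := by
          rw [integral_add Int1 Int2]
      _ = ∫ y, K y * ((-c * arctan (ε * (x - y)) + -c * arctan (ε * (x + y))) / 2) := by
          rw [← integral_div]; congr 1; funext y; ring
  -- pointwise comparison
  have hptwise : ∀ y : ℝ,
      (-c * arctan (ε * x)) * K y
        - (16 * c * ε ^ 2 * ((-arctan (ε * x)) / (1 + (ε * x) ^ 2))) * (y ^ 2 * K y)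
      ≤ K y * ((-c * arctan (ε * (x - y)) + -c * arctan (ε * (x + y))) / 2) := by
    intro y
    have hDb : arctan (ε * x - ε * y) + arctan (ε * x + ε * y) - 2 * arctan (ε * x)
        ≤ 32 * (ε * y) ^ 2 * (-arctan (ε * x)) / (1 + (ε * x) ^ 2) := by
      have habs := D_bound (ε * x) |ε * y| hu (abs_nonneg _)
      rw [sq_abs] at habs
      rcases abs_cases (ε * y) with ⟨h1, _⟩ | ⟨h1, _⟩
      · rw [h1] at habs; linarith
      · rw [h1, show ε * x - -(ε * y) = ε * x + ε * y by ring,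
          show ε * x + -(ε * y) = ε * x - ε * y by ring] at habs
        linarith
    have hK := hKpos y
    rw [show ε * (x - y) = ε * x - ε * y by ring, show ε * (x + y) = ε * x + ε * y by ring]
    have hmul := mul_le_mul_of_nonneg_left hDb (mul_nonneg (by positivity : (0:ℝ) ≤ c / 2) hK)
    have hexp : c / 2 * K y * (32 * (ε * y) ^ 2 * (-arctan (ε * x)) / (1 + (ε * x) ^ 2))
        = 16 * c * ε ^ 2 * ((-arctan (ε * x)) / (1 + (ε * x) ^ 2)) * (y ^ 2 * K y) := by
      field_simp; ring
    rw [hexp] at hmul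
    nlinarith [hmul]
  -- integrability of the lower comparison function
  have If2 : Integrable (fun y =>
      (-c * arctan (ε * x)) * K y
        - (16 * c * ε ^ 2 * ((-arctan (ε * x)) / (1 + (ε * x) ^ 2))) * (y ^ 2 * K y)) :=
    (hKint.const_mul _).sub (hK2.const_mul _)
  have If1 : Integrable (fun y => K y * ((-c * arctan (ε * (x - y)) + -c * arctan (ε * (x + y))) / 2)) := by
    have e : (fun y => K y * ((-c * arctan (ε * (x - y)) + -c * arctan (ε * (x + y))) / 2))
        = fun y => (K y * (-c * arctan (ε * (x - y))) + K y * (-c * arctan (ε * (x + y)))) / 2 := by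
      funext y; ring
    rw [e]; exact (Int1.add Int2).div_const 2
  have hmono := integral_mono If2 If1 hptwise
  have hval : (∫ y, ((-c * arctan (ε * x)) * K y
      - (16 * c * ε ^ 2 * ((-arctan (ε * x)) / (1 + (ε * x) ^ 2))) * (y ^ 2 * K y)))
      = (-c * arctan (ε * x)) - (16 * c * ε ^ 2 * ((-arctan (ε * x)) / (1 + (ε * x) ^ 2))) * M := by
    rw [integral_sub (hKint.const_mul _) (hK2.const_mul _), integral_const_mul, integral_const_mul,
      hKnorm, ← hMdef]
    ring
  -- final assembly
  have h16 : 16 * ε * M ≤ c := by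
    have h := (le_div_iff₀ (by positivity : (0:ℝ) < 16 * (M + 1))).mp hεle
    nlinarith [hε.le, hM0]
  have hfinal : -c * arctan (ε * x) + -c * arctan (ε * x) * (-c * (1 / (1 + (ε * x) ^ 2) * ε))
      ≤ (-c * arctan (ε * x)) - (16 * c * ε ^ 2 * ((-arctan (ε * x)) / (1 + (ε * x) ^ 2))) * M := by
    have hdiff : ((-c * arctan (ε * x)) - (16 * c * ε ^ 2 * ((-arctan (ε * x)) / (1 + (ε * x) ^ 2))) * M)
        - (-c * arctan (ε * x) + -c * arctan (ε * x) * (-c * (1 / (1 + (ε * x) ^ 2) * ε)))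
        = (c ^ 2 * ε - 16 * c * ε ^ 2 * M) * ((-arctan (ε * x)) / (1 + (ε * x) ^ 2)) := by
      field_simp
      ring
    have hnn : 0 ≤ (c ^ 2 * ε - 16 * c * ε ^ 2 * M) * ((-arctan (ε * x)) / (1 + (ε * x) ^ 2)) := by
      apply mul_nonneg _ hT0
      nlinarith [mul_le_mul_of_nonneg_left h16 (mul_nonneg hc0.le hε.le)]
    linarith [hdiff ▸ hnn]
  calc -c * arctan (ε * x) + -c * arctan (ε * x) * (-c * (1 / (1 + (ε * x) ^ 2) * ε))
      ≤ (-c * arctan (ε * x)) - (16 * c * ε ^ 2 * ((-arctan (ε * x)) / (1 + (ε * x) ^ 2))) * M := hfinal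
    _ = ∫ y, ((-c * arctan (ε * x)) * K y
        - (16 * c * ε ^ 2 * ((-arctan (ε * x)) / (1 + (ε * x) ^ 2))) * (y ^ 2 * K y)) := hval.symm
    _ ≤ ∫ y, K y * ((-c * arctan (ε * (x - y)) + -c * arctan (ε * (x + y))) / 2) := hmono
    _ = ∫ y, K (x - y) * (-c * arctan (ε * y)) := step3.symm
end

section
/- Discontinuity criterion: let K ≥ 0 be even, integrable, ∫K = 1, ∫|y|K(y)dy < ∞, and let U be a monotone traveling-wave profile solving U'(U−s) = K*U − U on ℝ∖{0} with U(−∞)=u₋, U(+∞)=u₊, u₋ > u₊, s = (u₋+u₊)/2, and U − s odd. If u₋ − u₊ > 4∫_ℝ |y|K(y)dy, then U is discontinuous at 0. -/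
open MeasureTheory Filter Set intervalIntegral

theorem discontinuity_criterion (K U U' : ℝ → ℝ) (uminus uplus : ℝ)
    (hKpos : ∀ z, 0 ≤ K z) (hKeven : ∀ z, K (-z) = K z)
    (hKint : Integrable K) (hKnorm : ∫ y, K y = 1)
    (hKmom : Integrable (fun y => |y| * K y))
    (hord : uplus < uminus)
    (hU_mono : Antitone U)
    (hU_meas : Measurable U)
    (hU_deriv : ∀ x ≠ (0:ℝ), HasDerivAt U (U' x) x)
    (hodd : ∀ x, U (-x) - (uminus + uplus) / 2 = -(U x - (uminus + uplus) / 2))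
    (heq : ∀ x ≠ (0:ℝ),
      U' x * (U x - (uminus + uplus) / 2) = (∫ y, K (x - y) * U y) - U x)
    (hlim_bot : Tendsto U atBot (nhds uminus))
    (hlim_top : Tendsto U atTop (nhds uplus))
    (hcrit : uminus - uplus > 4 * ∫ y, |y| * K y) :
    ¬ ContinuousAt U 0 := by
  intro hcont
  set s : ℝ := (uminus + uplus) / 2 with hs_def
  set M : ℝ := ∫ y, |y| * K y with hM_def
  have hUle : ∀ x, U x ≤ uminus := fun x =>
    ge_of_tendsto hlim_bot (eventually_atBot.mpr ⟨x, fun t ht => hU_mono ht⟩)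
  have hUge : ∀ x, uplus ≤ U x := fun x =>
    le_of_tendsto hlim_top (eventually_atTop.mpr ⟨x, fun t ht => hU_mono ht⟩)
  have hU0 : U 0 = s := by have h := hodd 0; rw [neg_zero] at h; linarith
  set C : ℝ := max |uminus| |uplus| with hC_def
  have hUbd : ∀ x, |U x| ≤ C := by
    intro x
    have h1 : uminus ≤ C := le_trans (le_abs_self _) (le_max_left _ _)
    have h2 : -C ≤ uplus := by
      have := neg_abs_le uplus
      have := le_max_right |uminus| |uplus|
      linarith
    exact abs_le.2 ⟨le_trans h2 (hUge x), le_trans (hUle x) h1⟩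
  have hUii : ∀ p q : ℝ, IntervalIntegrable U volume p q := fun p q =>
    hU_mono.intervalIntegrable
  have hUshiftmono : ∀ y : ℝ, Antitone (fun x => U (x + y)) := fun y x1 x2 h =>
    hU_mono (by linarith)
  have hKx : ∀ x : ℝ, Integrable (fun y => K (x - y)) := fun x => hKint.comp_sub_left x
  have hK1 : ∀ x : ℝ, (∫ y, K (x - y)) = 1 := fun x => by
    rw [integral_sub_left_eq_self K volume x]; exact hKnorm
  have hint2 : ∀ x : ℝ, Integrable (fun y => K y * U (x - y)) := by
    intro x
    refine (hKint.mul_const C).mono'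
      (hKint.aestronglyMeasurable.mul
        ((hU_meas.comp (measurable_const.sub measurable_id)).aestronglyMeasurable))
      (ae_of_all _ fun y => ?_)
    rw [Real.norm_eq_abs, abs_mul, abs_of_nonneg (hKpos y)]
    exact mul_le_mul_of_nonneg_left (hUbd _) (hKpos y)
  -- the main quantitative bound for 0 < ε < R
  have hmain : ∀ ε R : ℝ, 0 < ε → ε < R →
      (U R - s) * (U R - s) / 2 - (U ε - s) * (U ε - s) / 2 ≤ (uminus - uplus) / 2 * M := by
    intro ε R hε hεR
    set g : ℝ → ℝ := fun x => (∫ y, K (x - y) * U y) - U x with hg_def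
    have hgx : ∀ x, g x = (∫ y, K (x - y) * U y) - U x := fun x => rfl
    -- FTC
    have hderiv : ∀ x ∈ uIcc ε R, HasDerivAt (fun t => (U t - s) * (U t - s) / 2) (g x) x := by
      intro x hx
      rw [uIcc_of_le hεR.le] at hx
      have hx0 : x ≠ 0 := ne_of_gt (lt_of_lt_of_le hε hx.1)
      have hd := (hU_deriv x hx0).sub_const s
      have h2 := (hd.mul hd).div_const 2
      have h3 : (U' x * (U x - s) + (U x - s) * U' x) / 2 = g x := by
        have h4 := heq x hx0
        rw [hgx]; linarith
      rw [← h3]; exact h2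
    have hgbd : ∀ x, |g x| ≤ 2 * C := by
      intro x
      have h5 : |∫ y, K (x - y) * U y| ≤ C := by
        have h6 : ‖∫ y, K (x - y) * U y‖ ≤ ∫ y, K (x - y) * C := by
          refine norm_integral_le_of_norm_le ((hKx x).mul_const C) (ae_of_all _ fun y => ?_)
          rw [Real.norm_eq_abs, abs_mul, abs_of_nonneg (hKpos _)]
          exact mul_le_mul_of_nonneg_left (hUbd _) (hKpos _)
        rw [Real.norm_eq_abs] at h6
        have h7 : (∫ y, K (x - y) * C) = C := by
          rw [MeasureTheory.integral_mul_const, hK1, one_mul]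
        linarith
      have := hUbd x
      have h8 := abs_sub_abs_le_abs_sub (∫ y, K (x - y) * U y) (U x)
      have h9 := abs_sub (∫ y, K (x - y) * U y) (U x)
      calc |g x| = |(∫ y, K (x - y) * U y) - U x| := by rw [hgx]
        _ ≤ |∫ y, K (x - y) * U y| + |U x| := abs_sub _ _
        _ ≤ 2 * C := by linarith
    have hgi : IntervalIntegrable g volume ε R := by
      rw [intervalIntegrable_iff_integrableOn_Ioc_of_le hεR.le]
      have hm : AEStronglyMeasurable (fun x => deriv U x * (U x - s))
          (volume.restrict (Ioc ε R)) :=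
        ((measurable_deriv U).mul (hU_meas.sub measurable_const)).aestronglyMeasurable
      have hcongr : (fun x => deriv U x * (U x - s)) =ᵐ[volume.restrict (Ioc ε R)] g := by
        rw [Filter.EventuallyEq, ae_restrict_iff' measurableSet_Ioc]
        refine ae_of_all _ fun x hx => ?_
        have hx0 : x ≠ 0 := ne_of_gt (lt_trans hε hx.1)
        rw [(hU_deriv x hx0).deriv, hgx]
        exact heq x hx0
      refine Integrable.mono' (g := fun _ => 2 * C) ?_ (hm.congr hcongr)
        (ae_of_all _ fun x => by rw [Real.norm_eq_abs]; exact hgbd x)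
      exact (integrableOn_const_iff).2 (Or.inr measure_Ioc_lt_top)
    have hftc : ∫ x in ε..R, g x
        = (U R - s) * (U R - s) / 2 - (U ε - s) * (U ε - s) / 2 :=
      integral_eq_sub_of_hasDerivAt hderiv hgi
    -- rewrite g as a convolution-type integral
    have hgx2 : ∀ x : ℝ, g x = ∫ y, K y * (U (x - y) - U x) := by
      intro x
      have e1 : (∫ y, K (x - y) * U y) = ∫ y, K y * U (x - y) := by
        have h := integral_sub_left_eq_self (fun y => K y * U (x - y)) volume x
        simp only [sub_sub_cancel] at h
        exact h
      have e2 : (∫ y, K y * U x) = U x := by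
        rw [MeasureTheory.integral_mul_const, hKnorm, one_mul]
      have e3 : ∫ y, K y * (U (x - y) - U x)
          = (∫ y, K y * U (x - y)) - ∫ y, K y * U x := by
        rw [← integral_sub (hint2 x) (hKint.mul_const (U x))]
        congr 1; ext y; ring
      rw [hgx, e1, e3, e2]
    set J : ℝ → ℝ := fun y => (∫ x in (ε - y)..(R - y), U x) - ∫ x in ε..R, U x with hJ_def
    have hJx : ∀ y, J y = (∫ x in (ε - y)..(R - y), U x) - ∫ x in ε..R, U x := fun y => rfl
    -- Fubini
    have hFint : Integrable (fun p : ℝ × ℝ => K p.2 * (U (p.1 - p.2) - U p.1))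
        ((volume.restrict (Ioc ε R)).prod volume) := by
      have hmes : AEStronglyMeasurable (fun p : ℝ × ℝ => K p.2 * (U (p.1 - p.2) - U p.1))
          ((volume.restrict (Ioc ε R)).prod volume) := by
        have h1 : AEMeasurable (fun p : ℝ × ℝ => K p.2)
            ((volume.restrict (Ioc ε R)).prod volume) := hKint.aemeasurable.comp_snd
        have h2 : Measurable (fun p : ℝ × ℝ => U (p.1 - p.2) - U p.1) :=
          (hU_meas.comp (measurable_fst.sub measurable_snd)).sub (hU_meas.comp measurable_fst)
        exact (h1.mul h2.aemeasurable).aestronglyMeasurable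
      refine Integrable.mono' (g := fun p : ℝ × ℝ => (2 * C) * K p.2) ?_ hmes
        (ae_of_all _ fun p => ?_)
      · exact Integrable.mul_prod (f := fun _ : ℝ => 2 * C)
          ((integrableOn_const_iff (C := 2 * C)).2 (Or.inr measure_Ioc_lt_top)) hKint
      · rw [Real.norm_eq_abs, abs_mul, abs_of_nonneg (hKpos _)]
        have hb1 := hUbd (p.1 - p.2)
        have hb2 := hUbd p.1
        rw [abs_le] at hb1 hb2
        have : |U (p.1 - p.2) - U p.1| ≤ 2 * C := abs_le.2 ⟨by linarith, by linarith⟩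
        calc K p.2 * |U (p.1 - p.2) - U p.1| ≤ K p.2 * (2 * C) :=
              mul_le_mul_of_nonneg_left this (hKpos _)
          _ = 2 * C * K p.2 := mul_comm _ _
    have hswap : (∫ x in Ioc ε R, ∫ y, K y * (U (x - y) - U x))
        = ∫ y, ∫ x in Ioc ε R, K y * (U (x - y) - U x) :=
      integral_integral_swap hFint
    -- evaluate the inner integral
    have hUyint : ∀ y : ℝ, IntegrableOn (fun x => U (x - y)) (Ioc ε R) := by
      intro y
      refine Integrable.mono' (g := fun _ => C)
        ((integrableOn_const_iff).2 (Or.inr measure_Ioc_lt_top))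
        ((hU_meas.comp (measurable_id.sub measurable_const)).aestronglyMeasurable) ?_
      exact ae_of_all _ fun x => by rw [Real.norm_eq_abs]; exact hUbd _
    have hinner : ∀ y : ℝ, (∫ x in Ioc ε R, K y * (U (x - y) - U x)) = K y * J y := by
      intro y
      rw [MeasureTheory.integral_const_mul]
      congr 1
      rw [integral_sub (hUyint y) (hUii ε R).1, hJx]
      congr 1
      · rw [← intervalIntegral.integral_of_le hεR.le,
          intervalIntegral.integral_comp_sub_right U y]
      · rw [intervalIntegral.integral_of_le hεR.le]
    have hφint : Integrable (fun y => K y * J y) := by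
      have h := hFint.integral_prod_right
      exact h.congr (ae_of_all _ fun y => hinner y)
    -- the key inequality
    have hJkey : ∀ y : ℝ, 0 ≤ y → J y + J (-y) ≤ (uminus - uplus) * y := by
      intro y hy
      have d1 : (∫ x in (ε - y)..(R - y), U x)
          = (∫ x in (ε - y)..ε, U x) + ∫ x in ε..(R - y), U x :=
        (integral_add_adjacent_intervals (hUii _ _) (hUii _ _)).symm
      have d2 : (∫ x in ε..R, U x)
          = (∫ x in ε..(R - y), U x) + ∫ x in (R - y)..R, U x :=
        (integral_add_adjacent_intervals (hUii _ _) (hUii _ _)).symm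
      have d3 : (∫ x in (ε - -y)..(R - -y), U x)
          = (∫ x in (ε + y)..R, U x) + ∫ x in R..(R + y), U x := by
        rw [sub_neg_eq_add, sub_neg_eq_add]
        exact (integral_add_adjacent_intervals (hUii _ _) (hUii _ _)).symm
      have d4 : (∫ x in ε..R, U x)
          = (∫ x in ε..(ε + y), U x) + ∫ x in (ε + y)..R, U x :=
        (integral_add_adjacent_intervals (hUii _ _) (hUii _ _)).symm
      have hA : (∫ x in (ε - y)..ε, U x) - (∫ x in ε..(ε + y), U x)
          ≤ (uminus - uplus) * y := by
        have s1 : (∫ x in (ε - y)..ε, U (x + y)) = ∫ x in ε..(ε + y), U x := by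
          rw [intervalIntegral.integral_comp_add_right U y]
          congr 1 <;> ring
        rw [← s1, ← intervalIntegral.integral_sub (hUii _ _)
          ((hUshiftmono y).intervalIntegrable)]
        have hmono2 : (∫ x in (ε - y)..ε, (U x - U (x + y)))
            ≤ ∫ x in (ε - y)..ε, (uminus - uplus) := by
          refine intervalIntegral.integral_mono_on (by linarith)
            ((hUii _ _).sub ((hUshiftmono y).intervalIntegrable))
            intervalIntegrable_const (fun x hx => ?_)
          have := hUle x
          have := hUge (x + y)
          linarith
        have hconst : (∫ x in (ε - y)..ε, (uminus - uplus) : ℝ)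
            = (uminus - uplus) * y := by
          rw [intervalIntegral.integral_const, smul_eq_mul]
          ring
        linarith
      have hB : (∫ x in R..(R + y), U x) - (∫ x in (R - y)..R, U x) ≤ 0 := by
        have s2 : (∫ x in (R - y)..R, U (x + y)) = ∫ x in R..(R + y), U x := by
          rw [intervalIntegral.integral_comp_add_right U y]
          congr 1 <;> ring
        rw [← s2, ← intervalIntegral.integral_sub ((hUshiftmono y).intervalIntegrable)
          (hUii _ _)]
        have hmono3 : (∫ x in (R - y)..R, (U (x + y) - U x))
            ≤ ∫ x in (R - y)..R, (0:ℝ) := by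
          refine intervalIntegral.integral_mono_on (by linarith)
            (((hUshiftmono y).intervalIntegrable).sub (hUii _ _))
            intervalIntegrable_const (fun x hx => ?_)
          have := hU_mono (le_add_of_nonneg_right hy : x ≤ x + y)
          linarith
        simpa using hmono3
      have eJy : J y = (∫ x in (ε - y)..ε, U x) - ∫ x in (R - y)..R, U x := by
        rw [hJx, d1, d2]; ring
      have eJny : J (-y) = (∫ x in R..(R + y), U x) - ∫ x in ε..(ε + y), U x := by
        rw [hJx, d3, d4]; ring
      rw [eJy, eJny]
      linarith
    -- bound the outer integral
    have hφnegint : Integrable (fun y => K (-y) * J (-y)) := by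
      have : Integrable (fun y => K (-y) * J (-y)) volume := hφint.comp_neg
      exact this
    have hsplit : (∫ y, K y * J y)
        = (∫ y in Iic 0, K y * J y) + ∫ y in Ioi 0, K y * J y :=
      (integral_Iic_add_Ioi hφint.integrableOn hφint.integrableOn).symm
    have hneg : (∫ y in Iic 0, K y * J y) = ∫ y in Ioi 0, K (-y) * J (-y) := by
      have h := integral_comp_neg_Ioi 0 (fun y => K y * J y)
      rw [neg_zero] at h
      exact h.symm
    have hRHSint : IntegrableOn (fun y => K y * ((uminus - uplus) * y)) (Ioi 0) := by
      refine ((hKmom.const_mul (uminus - uplus)).integrableOn).congr_fun ?_ measurableSet_Ioi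
      intro y hy
      simp only
      rw [abs_of_pos hy]
      ring
    have hmono : (∫ y in Ioi 0, (K y * J y + K (-y) * J (-y)))
        ≤ ∫ y in Ioi 0, K y * ((uminus - uplus) * y) := by
      refine setIntegral_mono_on (hφint.integrableOn.add hφnegint.integrableOn)
        hRHSint measurableSet_Ioi (fun y hy => ?_)
      have : K (-y) = K y := hKeven y
      rw [this]
      have h1 : K y * J y + K y * J (-y) = K y * (J y + J (-y)) := by ring
      rw [h1]
      exact mul_le_mul_of_nonneg_left (hJkey y (le_of_lt hy)) (hKpos y)
    have hsum : (∫ y in Ioi 0, (K y * J y + K (-y) * J (-y)))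
        = (∫ y in Ioi 0, K y * J y) + ∫ y in Ioi 0, K (-y) * J (-y) :=
      integral_add hφint.integrableOn hφnegint.integrableOn
    have hval : (∫ y in Ioi 0, K y * ((uminus - uplus) * y)) = (uminus - uplus) / 2 * M := by
      have he : (∫ y in Ioi 0, K y * ((uminus - uplus) * y))
          = (uminus - uplus) * ∫ y in Ioi 0, |y| * K y := by
        rw [← MeasureTheory.integral_const_mul]
        refine setIntegral_congr_fun measurableSet_Ioi (fun y hy => ?_)
        rw [abs_of_pos hy]
        ring
      have hM2 : M = 2 * ∫ y in Ioi 0, |y| * K y := by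
        have h1 : M = (∫ y in Iic 0, |y| * K y) + ∫ y in Ioi 0, |y| * K y :=
          (integral_Iic_add_Ioi hKmom.integrableOn hKmom.integrableOn).symm
        have h3 := integral_comp_neg_Ioi 0 (fun y => |y| * K y)
        rw [neg_zero] at h3
        have h2 : (∫ y in Iic 0, |y| * K y) = ∫ y in Ioi 0, |y| * K y := by
          rw [← h3]
          refine setIntegral_congr_fun measurableSet_Ioi (fun y hy => ?_)
          simp [abs_neg, hKeven]
        linarith
      rw [he, hM2]
      ring
    -- put everything together
    have hchain : (∫ x in ε..R, g x) ≤ (uminus - uplus) / 2 * M := by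
      have c1 : (∫ x in ε..R, g x) = ∫ x in Ioc ε R, g x :=
        intervalIntegral.integral_of_le hεR.le
      have c2 : (∫ x in Ioc ε R, g x)
          = ∫ x in Ioc ε R, ∫ y, K y * (U (x - y) - U x) :=
        integral_congr_ae (ae_of_all _ fun x => hgx2 x)
      have c3 : (∫ y, ∫ x in Ioc ε R, K y * (U (x - y) - U x)) = ∫ y, K y * J y :=
        integral_congr_ae (ae_of_all _ fun y => hinner y)
      rw [c1, c2, hswap, c3, hsplit, hneg]
      calc (∫ y in Ioi 0, K (-y) * J (-y)) + ∫ y in Ioi 0, K y * J y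
          = ∫ y in Ioi 0, (K y * J y + K (-y) * J (-y)) := by rw [hsum]; ring
        _ ≤ ∫ y in Ioi 0, K y * ((uminus - uplus) * y) := hmono
        _ = (uminus - uplus) / 2 * M := hval
    linarith [hftc ▸ hchain]
  -- limit ε → 0⁺
  have hmain' : ∀ R : ℝ, 0 < R →
      (U R - s) * (U R - s) / 2 ≤ (uminus - uplus) / 2 * M := by
    intro R hR
    have hU0' : Tendsto U (nhdsWithin 0 (Ioi 0)) (nhds s) := by
      have h := hcont.tendsto
      rw [hU0] at h
      exact h.mono_left nhdsWithin_le_nhds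
    have hc : Tendsto (fun ε => (U R - s) * (U R - s) / 2 - (U ε - s) * (U ε - s) / 2)
        (nhdsWithin 0 (Ioi 0))
        (nhds ((U R - s) * (U R - s) / 2 - (s - s) * (s - s) / 2)) := by
      exact tendsto_const_nhds.sub
        (((hU0'.sub tendsto_const_nhds).mul (hU0'.sub tendsto_const_nhds)).div_const 2)
    have hev : ∀ᶠ ε in nhdsWithin 0 (Ioi 0),
        (U R - s) * (U R - s) / 2 - (U ε - s) * (U ε - s) / 2
          ≤ (uminus - uplus) / 2 * M :=
      eventually_of_mem (Ioo_mem_nhdsGT_of_mem ⟨le_refl 0, hR⟩)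
        (fun ε hε => hmain ε R hε.1 hε.2)
    have := le_of_tendsto hc hev
    simpa using this
  -- limit R → ∞
  have hT : Tendsto (fun R => (U R - s) * (U R - s) / 2) atTop
      (nhds ((uplus - s) * (uplus - s) / 2)) :=
    ((hlim_top.sub tendsto_const_nhds).mul (hlim_top.sub tendsto_const_nhds)).div_const 2
  have hle := le_of_tendsto hT
    (eventually_atTop.mpr ⟨1, fun R hR => hmain' R (by linarith)⟩)
  have hD : 0 < uminus - uplus := sub_pos.mpr hord
  have hs' : uplus - s = -((uminus - uplus) / 2) := by rw [hs_def]; ring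
  rw [hs'] at hle
  nlinarith [hle, hcrit, hD, mul_pos hD hD]
end
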